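/- arXiv:cs/0312014 — 2 statements merged into one kernel-verified Lean document; each statement's English description precedes it below -/
import Mathlib

section
/- Let D denote the set of all 2-valued structures satisfying the integrity formula F, and let S be an ICA structure. Then there exists a set X of ICA structures such that γ_c(X) = D \ γ_c(S). -/
/-!
Common framework: 2-valued and 3-valued logical structures over a relational
vocabulary with a designated binary equality predicate, embedding, first-order
formulas with transitive closure and their Tarskian semantics, characteristic
formulas, canonical abstraction.
-/

namespace HeapAbs

/-- The three truth values 0, 1/2, 1. -/
inductive TV : Type
  | zero
  | half
  | one
  deriving DecidableEq

/-- Information order on truth values: `l1 ⊑ l2` iff `l1 = l2` or `l2 = 1/2`. -/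
def TV.le (a b : TV) : Prop := a = b ∨ b = TV.half

/-- `v` is the least upper bound (join) of the set `A` in the information order. -/
def TV.IsJoin (A : Set TV) (v : TV) : Prop :=
  (∀ a ∈ A, TV.le a v) ∧ ∀ w, (∀ a ∈ A, TV.le a w) → TV.le v w

/-- A (relational) vocabulary: a set of predicate symbols with arities and a
designated binary equality symbol. -/
structure Voc : Type 1 where
  rel : Type
  ar : rel → ℕ
  eqr : rel
  eq_ar : ar eqr = 2

/-- The pair `(u, v)` as a tuple (used for binary predicates). -/
def pair {α : Type _} {n : ℕ} (u v : α) : Fin n → α :=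
  fun i => if (i : ℕ) = 0 then u else v

/-- A 3-valued logical structure over the vocabulary `σ`. -/
structure Str3 (σ : Voc) : Type 1 where
  U : Type
  ι : (r : σ.rel) → (Fin (σ.ar r) → U) → TV
  eq_refl : ∀ u : U, ι σ.eqr (pair u u) ≠ TV.zero
  eq_ne : ∀ u v : U, u ≠ v → ι σ.eqr (pair u v) = TV.zero

/-- A 2-valued logical structure over `σ`: all predicate values are definite and
the equality symbol is interpreted as true equality. -/
structure Str2 (σ : Voc) : Type 1 where
  U : Type
  ι : (r : σ.rel) → (Fin (σ.ar r) → U) → Bool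
  eq_iff : ∀ u v : U, ι σ.eqr (pair u v) = true ↔ u = v

/-- The value of a predicate of a 2-valued structure, seen as a truth value. -/
def Str2.tv {σ : Voc} (C : Str2 σ) (r : σ.rel) (t : Fin (σ.ar r) → C.U) : TV :=
  if C.ι r t then TV.one else TV.zero

/-- `f` embeds the 2-valued structure `C` into the 3-valued structure `S`:
`f` is surjective and every predicate value of `C` is ⊑ the corresponding
value of `S`. -/
def Embeds {σ : Voc} (C : Str2 σ) (S : Str3 σ) (f : C.U → S.U) : Prop :=
  Function.Surjective f ∧
    ∀ (r : σ.rel) (t : Fin (σ.ar r) → C.U), TV.le (C.tv r t) (S.ι r (f ∘ t))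

/-- First-order formulas with transitive closure over vocabulary `σ`, with
free variables drawn from `V`. -/
inductive Fml (σ : Voc) : Type → Type 1 where
  | tru {V : Type} : Fml σ V
  | atom {V : Type} (r : σ.rel) (ts : Fin (σ.ar r) → V) : Fml σ V
  | not {V : Type} : Fml σ V → Fml σ V
  | or {V : Type} : Fml σ V → Fml σ V → Fml σ V
  | ex {V : Type} : Fml σ (Option V) → Fml σ V
  | tc {V : Type} (φ : Fml σ (Option (Option V))) (a b : V) : Fml σ V

/-- Tarskian satisfaction of a formula in a 2-valued structure under an
assignment `ρ` of the free variables. -/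
def Str2.Sat {σ : Voc} (C : Str2 σ) : {V : Type} → (V → C.U) → Fml σ V → Prop
  | _, _, .tru => True
  | _, ρ, .atom r ts => C.ι r (ρ ∘ ts) = true
  | _, ρ, .not φ => ¬ C.Sat ρ φ
  | _, ρ, .or φ ψ => C.Sat ρ φ ∨ C.Sat ρ ψ
  | _, ρ, .ex φ => ∃ m : C.U, C.Sat (fun v => Option.elim v m ρ) φ
  | _, ρ, .tc φ a b =>
      Relation.TransGen
        (fun x y => C.Sat (fun v => Option.elim v y (fun v' => Option.elim v' x ρ)) φ)
        (ρ a) (ρ b)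

/-- Satisfaction of a closed formula. -/
def SatC {σ : Voc} (C : Str2 σ) (φ : Fml σ Empty) : Prop :=
  C.Sat (fun x => x.elim) φ

namespace Fml

def fls {σ : Voc} {V : Type} : Fml σ V := .not .tru

def and {σ : Voc} {V : Type} (φ ψ : Fml σ V) : Fml σ V := .not (.or (.not φ) (.not ψ))

def imp {σ : Voc} {V : Type} (φ ψ : Fml σ V) : Fml σ V := .or (.not φ) ψ

def all {σ : Voc} {V : Type} (φ : Fml σ (Option V)) : Fml σ V := .not (.ex (.not φ))

def conj {σ : Voc} {V : Type} (l : List (Fml σ V)) : Fml σ V := l.foldr .and .tru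

def disj {σ : Voc} {V : Type} (l : List (Fml σ V)) : Fml σ V := l.foldr .or .fls

/-- Renaming of free variables. -/
def map {σ : Voc} : {V W : Type} → (V → W) → Fml σ V → Fml σ W
  | _, _, _, .tru => .tru
  | _, _, g, .atom r ts => .atom r (g ∘ ts)
  | _, _, g, .not φ => .not (φ.map g)
  | _, _, g, .or φ ψ => .or (φ.map g) (ψ.map g)
  | _, _, g, .ex φ => .ex (φ.map (Option.map g))
  | _, _, g, .tc φ a b => .tc (φ.map (Option.map (Option.map g))) (g a) (g b)

end Fml

/-- The characteristic formula `p^B` of the truth value `B` for the predicate `p`: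
`p^0 := ¬p`, `p^1 := p`, `p^{1/2} := true`. -/
def charFml {σ : Voc} {V : Type} (p : σ.rel) (ts : Fin (σ.ar p) → V) : TV → Fml σ V
  | TV.zero => .not (.atom p ts)
  | TV.one => .atom p ts
  | TV.half => .tru

/-- `node` is a family of node formulas (one per node of `S`, with a single free
variable `w`) witnessing that `S` is FO-identifiable: for every 2-valued `C`
embedding into `S` via `f` and every concrete node `uh`, `f uh = u` iff `C`
satisfies `node u` under `[w ↦ uh]`. -/
def IsNodeFamily {σ : Voc} (S : Str3 σ) (node : S.U → Fml σ Unit) : Prop :=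
  ∀ (C : Str2 σ) (f : C.U → S.U), Embeds C S f →
    ∀ (uh : C.U) (u : S.U), f uh = u ↔ C.Sat (fun _ => uh) (node u)

/-- `S` is FO-identifiable. -/
def FOIdentifiable {σ : Voc} (S : Str3 σ) : Prop :=
  ∃ node : S.U → Fml σ Unit, IsNodeFamily S node

/-- Mutual exclusivity of a family of node formulas: in every 2-valued structure
that embeds into `S`, every concrete node satisfies at most one node formula. -/
def MutExcl {σ : Voc} (S : Str3 σ) (node : S.U → Fml σ Unit) : Prop :=
  ∀ C : Str2 σ, (∃ f : C.U → S.U, Embeds C S f) →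
    ∀ (uh : C.U) (u1 u2 : S.U), u1 ≠ u2 →
      ¬ (C.Sat (fun _ => uh) (node u1) ∧ C.Sat (fun _ => uh) (node u2))

/-- `S` is a bounded structure: any two distinct nodes are distinguished by a
unary predicate having distinct definite values on them. -/
def Bounded {σ : Voc} (S : Str3 σ) : Prop :=
  ∀ u1 u2 : S.U, u1 ≠ u2 →
    ∃ p : σ.rel, σ.ar p = 1 ∧
      S.ι p (fun _ => u1) ≠ S.ι p (fun _ => u2) ∧
      S.ι p (fun _ => u1) ≠ TV.half ∧ S.ι p (fun _ => u2) ≠ TV.half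

/-- The node formula `node^S_u(w) := ⋀_{p unary} p^{ι^S(p)(u)}(w)`. -/
noncomputable def boundedNode {σ : Voc} [Fintype σ.rel] (S : Str3 σ) (u : S.U) : Fml σ Unit :=
  Fml.conj
    (((Finset.univ : Finset {p : σ.rel // σ.ar p = 1}).toList).map
      (fun p => charFml p.1 (fun _ => ()) (S.ι p.1 (fun _ => u))))

/-- The conjunction `⋀_j node_{t j}(w_j)` over the components of a tuple of
abstract nodes, as a formula with free variables `w_1, …, w_n`. -/
def nodeTuple {σ : Voc} (S : Str3 σ) (node : S.U → Fml σ Unit) {n : ℕ}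
    (t : Fin n → S.U) : Fml σ (Fin n) :=
  Fml.conj (List.ofFn fun j : Fin n => (node (t j)).map (fun _ => j))

/-- Universal closure of a formula with `n` free variables. -/
def closeAll {σ : Voc} : {n : ℕ} → Fml σ (Fin n) → Fml σ Empty
  | 0, φ => φ.map Fin.elim0
  | _ + 1, φ =>
      closeAll (Fml.all (φ.map (fun i => Fin.lastCases none (fun j => some j) i)))

/-- Existential closure of a formula with `n` free variables. -/
def closeEx {σ : Voc} : {n : ℕ} → Fml σ (Fin n) → Fml σ Empty
  | 0, φ => φ.map Fin.elim0
  | _ + 1, φ =>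
      closeEx (Fml.ex (φ.map (fun i => Fin.lastCases none (fun j => some j) i)))

/-- `∃ v : node_u(v)`. -/
noncomputable def existsNode {σ : Voc} (S : Str3 σ) (node : S.U → Fml σ Unit) (u : S.U) :
    Fml σ Empty :=
  .ex ((node u).map (fun _ => (none : Option Empty)))

/-- The totality formula `∀ w : ⋁_i node_{u_i}(w)`. -/
noncomputable def xiTotal {σ : Voc} (S : Str3 σ) [Fintype S.U] (node : S.U → Fml σ Unit) :
    Fml σ Empty :=
  Fml.all (Fml.disj
    (((Finset.univ : Finset S.U).toList).map
      (fun u => (node u).map (fun _ => (none : Option Empty)))))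

/-- The nullary characteristic formula `⋀_{p nullary} p^{ι^S(p)()}`. -/
noncomputable def xiNullary {σ : Voc} [Fintype σ.rel] (S : Str3 σ) : Fml σ Empty :=
  Fml.conj
    (((Finset.univ : Finset σ.rel).toList).map (fun p =>
      if h : σ.ar p = 0 then
        charFml p (fun i => Fin.elim0 (Fin.cast h i))
          (S.ι p (fun i => Fin.elim0 (Fin.cast h i)))
      else .tru))

/-- The predicate characteristic formula
`∀ w1 … wr : ⋀_{tuples ū} ((⋀_j node_{ū j}(w_j)) → p^{ι^S(p)(ū)}(w̄))`. -/
noncomputable def xiPred {σ : Voc} (S : Str3 σ) [Fintype S.U] (node : S.U → Fml σ Unit)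
    (p : σ.rel) : Fml σ Empty :=
  closeAll (Fml.conj
    (((Finset.univ : Finset (Fin (σ.ar p) → S.U)).toList).map
      (fun t => Fml.imp (nodeTuple S node t)
        (charFml p (fun j => j) (S.ι p t)))))

/-- Conjunction of the predicate characteristic formulas over all predicates of
arity ≥ 1. -/
noncomputable def xiPredAll {σ : Voc} [Fintype σ.rel] (S : Str3 σ) [Fintype S.U]
    (node : S.U → Fml σ Unit) : Fml σ Empty :=
  Fml.conj
    (((Finset.univ : Finset σ.rel).toList).map (fun p =>
      if σ.ar p = 0 then .tru else xiPred S node p))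

/-- The first-order characteristic formula `ξ^S` of `S` (w.r.t. the node
formulas `node`). -/
noncomputable def xi {σ : Voc} [Fintype σ.rel] (S : Str3 σ) [Fintype S.U]
    (node : S.U → Fml σ Unit) : Fml σ Empty :=
  (Fml.conj (((Finset.univ : Finset S.U).toList).map (existsNode S node))).and
    ((xiTotal S node).and ((xiNullary S).and (xiPredAll S node)))

/-- The concretization `γ(S)`: the 2-valued structures that embed into `S` and
satisfy the integrity formula `F`. -/
def gammaSet {σ : Voc} (F : Fml σ Empty) (S : Str3 σ) : Set (Str2 σ) :=
  {C | (∃ f : C.U → S.U, Embeds C S f) ∧ SatC C F}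

/-- `S` is the canonical abstraction of the 2-valued structure `C` via `blur`:
`blur` is a surjective embedding that identifies exactly the concrete nodes with
equal canonical names (the values of the unary predicates), and every abstract
predicate value is the join of the concrete values it represents. -/
def IsCanonAbs {σ : Voc} (C : Str2 σ) (S : Str3 σ) (blur : C.U → S.U) : Prop :=
  Embeds C S blur ∧
    (∀ u v : C.U, blur u = blur v ↔
      ∀ p : σ.rel, σ.ar p = 1 → C.ι p (fun _ => u) = C.ι p (fun _ => v)) ∧
    ∀ (p : σ.rel) (t' : Fin (σ.ar p) → S.U),
      TV.IsJoin {b | ∃ t : Fin (σ.ar p) → C.U, blur ∘ t = t' ∧ C.tv p t = b}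
        (S.ι p t')

/-- `S` is an image of canonical abstraction. -/
def ICA {σ : Voc} (S : Str3 σ) : Prop :=
  ∃ (C : Str2 σ) (blur : C.U → S.U), IsCanonAbs C S blur

/-- The concretization of `S` under canonical abstraction. -/
def gammaC {σ : Voc} (F : Fml σ Empty) (S : Str3 σ) : Set (Str2 σ) :=
  {C | (∃ blur : C.U → S.U, IsCanonAbs C S blur) ∧ SatC C F}

/-- `node` is a family of node formulas witnessing canonical-FO-identifiability
of `S`. -/
def IsCanonNodeFamily {σ : Voc} (S : Str3 σ) (node : S.U → Fml σ Unit) : Prop :=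
  ∀ (C : Str2 σ) (blur : C.U → S.U), IsCanonAbs C S blur →
    ∀ (uh : C.U) (u : S.U), blur uh = u ↔ C.Sat (fun _ => uh) (node u)

/-- `τ^S[p]`: for every tuple where `p` has value 1/2, there are concrete
tuples (satisfying the node formulas) on which `p` holds, resp., fails. -/
noncomputable def tauPred {σ : Voc} (S : Str3 σ) [Fintype S.U] (node : S.U → Fml σ Unit)
    (p : σ.rel) : Fml σ Empty :=
  Fml.conj
    (((((Finset.univ : Finset (Fin (σ.ar p) → S.U)).toList).filter
        (fun t => decide (S.ι p t = TV.half))).map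
      (fun t =>
        (closeEx ((nodeTuple S node t).and (.atom p (fun j => j)))).and
          (closeEx ((nodeTuple S node t).and (.not (.atom p (fun j => j))))))))

/-- `τ^S := ξ^S ∧ ⋀_{p of arity ≥ 2} τ^S[p]`. -/
noncomputable def tau {σ : Voc} [Fintype σ.rel] (S : Str3 σ) [Fintype S.U]
    (node : S.U → Fml σ Unit) : Fml σ Empty :=
  (xi S node).and
    (Fml.conj (((Finset.univ : Finset σ.rel).toList).map (fun p =>
      if 2 ≤ σ.ar p then tauPred S node p else .tru)))

/-- Isomorphism of 3-valued structures. -/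
def Iso3 {σ : Voc} (S1 S2 : Str3 σ) : Prop :=
  ∃ e : S1.U ≃ S2.U,
    ∀ (p : σ.rel) (t : Fin (σ.ar p) → S1.U), S1.ι p t = S2.ι p (e ∘ t)

/-- Satisfaction of the NP (existential monadic second-order) characteristic
formula `ψ^S` of `S` in the 2-valued structure `C`: there exist sets `V_u`
(one per node `u` of `S`) that are nonempty, pairwise disjoint, and cover `C`,
such that the nullary and the predicate characteristic conjuncts hold with
`node_{u}(w) := w ∈ V_u`. -/
def SatNP {σ : Voc} (S : Str3 σ) (C : Str2 σ) : Prop :=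
  ∃ V : S.U → Set C.U,
    (∀ u : S.U, ∃ w, w ∈ V u) ∧
    (∀ u1 u2 : S.U, u1 ≠ u2 →
      ∀ w1 ∈ V u1, ∀ w2 ∈ V u2, ¬ C.ι σ.eqr (pair w1 w2) = true) ∧
    (∀ w : C.U, ∃ u : S.U, w ∈ V u) ∧
    (∀ (p : σ.rel) (h : σ.ar p = 0),
      TV.le (C.tv p (fun i => Fin.elim0 (Fin.cast h i)))
        (S.ι p (fun i => Fin.elim0 (Fin.cast h i)))) ∧
    (∀ (p : σ.rel), 1 ≤ σ.ar p →
      ∀ (t : Fin (σ.ar p) → C.U) (us : Fin (σ.ar p) → S.U),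
        (∀ j, t j ∈ V (us j)) → TV.le (C.tv p t) (S.ι p us))


/-! ### Auxiliary development for Statement 13 -/

lemma TV.le_half' (a : TV) : TV.le a TV.half := Or.inr rfl
lemma TV.le_refl' (a : TV) : TV.le a a := Or.inl rfl

lemma TV.isJoin_unique {A : Set TV} {v w : TV} (hv : TV.IsJoin A v) (hw : TV.IsJoin A w) :
    v = w := by
  rcases hv.2 w hw.1 with h | h
  · exact h
  · rcases hw.2 v hv.1 with h2 | h2
    · exact h2.symm
    · rw [h, h2]

/-- First index of the equality predicate's tuple. -/
def idx0 (σ : Voc) : Fin (σ.ar σ.eqr) := ⟨0, by rw [σ.eq_ar]; omega⟩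
/-- Second index of the equality predicate's tuple. -/
def idx1 (σ : Voc) : Fin (σ.ar σ.eqr) := ⟨1, by rw [σ.eq_ar]; omega⟩

lemma comp_pair {α β : Type _} {n : ℕ} (f : α → β) (u v : α) :
    f ∘ (pair (n := n) u v) = pair (f u) (f v) := by
  funext i
  by_cases h : (i : ℕ) = 0 <;> simp [pair, Function.comp, h]

lemma eqr_tuple_eq {σ : Voc} {α : Type _} (t : Fin (σ.ar σ.eqr) → α) :
    t = pair (t (idx0 σ)) (t (idx1 σ)) := by
  funext i
  by_cases h : (i : ℕ) = 0
  · have : i = idx0 σ := Fin.ext h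
    rw [this]; simp [pair, idx0]
  · have h1 : (i : ℕ) = 1 := by
      have hlt := i.isLt
      have he2 := σ.eq_ar
      omega
    have : i = idx1 σ := Fin.ext h1
    rw [this]; simp [pair, idx1]

lemma Str2.eq_iff' {σ : Voc} (C : Str2 σ) (t : Fin (σ.ar σ.eqr) → C.U) :
    C.ι σ.eqr t = true ↔ t (idx0 σ) = t (idx1 σ) := by
  have ht := eqr_tuple_eq t
  rw [show C.ι σ.eqr t = C.ι σ.eqr (pair (t (idx0 σ)) (t (idx1 σ))) from by rw [← ht],
    C.eq_iff]

/-- The setoid identifying concrete nodes with equal canonical names. -/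
def unSetoid {σ : Voc} (C : Str2 σ) : Setoid C.U where
  r u v := ∀ p : σ.rel, σ.ar p = 1 → C.ι p (fun _ => u) = C.ι p (fun _ => v)
  iseqv := ⟨fun _ _ _ => rfl, fun h p hp => (h p hp).symm,
    fun h1 h2 p hp => (h1 p hp).trans (h2 p hp)⟩

open Classical in
/-- Interpretation of the canonical abstraction of `C`: the join of concrete values. -/
noncomputable def canonI {σ : Voc} (C : Str2 σ) (p : σ.rel)
    (t' : Fin (σ.ar p) → Quotient (unSetoid C)) : TV :=
  if ∀ t : Fin (σ.ar p) → C.U, Quotient.mk (unSetoid C) ∘ t = t' → C.ι p t = true then TV.one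
  else if ∀ t : Fin (σ.ar p) → C.U, Quotient.mk (unSetoid C) ∘ t = t' → C.ι p t = false
    then TV.zero
  else TV.half

lemma canonRep {σ : Voc} (C : Str2 σ) {n : ℕ} (t' : Fin n → Quotient (unSetoid C)) :
    Quotient.mk (unSetoid C) ∘ (fun i => (t' i).out) = t' := by
  funext i; simp [Quotient.out_eq]

lemma canonI_isJoin {σ : Voc} (C : Str2 σ) (p : σ.rel)
    (t' : Fin (σ.ar p) → Quotient (unSetoid C)) :
    TV.IsJoin {b | ∃ t : Fin (σ.ar p) → C.U,
        Quotient.mk (unSetoid C) ∘ t = t' ∧ C.tv p t = b} (canonI C p t') := by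
  classical
  unfold canonI
  split_ifs with h1 h2
  · constructor
    · rintro a ⟨t, ht, rfl⟩
      simp [Str2.tv, h1 t ht, TV.le_refl']
    · intro w hw
      exact hw TV.one ⟨fun i => (t' i).out, canonRep C t', by
        simp [Str2.tv, h1 _ (canonRep C t')]⟩
  · constructor
    · rintro a ⟨t, ht, rfl⟩
      simp [Str2.tv, h2 t ht, TV.le_refl']
    · intro w hw
      exact hw TV.zero ⟨fun i => (t' i).out, canonRep C t', by
        simp [Str2.tv, h2 _ (canonRep C t')]⟩
  · constructor
    · intro a _; exact TV.le_half' a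
    · intro w hw
      push_neg at h1 h2
      obtain ⟨t0, ht0, ht0f⟩ := h1
      obtain ⟨t1, ht1, ht1t⟩ := h2
      have hzero : TV.le TV.zero w := hw TV.zero ⟨t0, ht0, by
        simp [Str2.tv, Bool.not_eq_true] at ht0f ⊢; simp [ht0f]⟩
      have hone : TV.le TV.one w := hw TV.one ⟨t1, ht1, by
        simp [Bool.not_eq_false] at ht1t; simp [Str2.tv, ht1t]⟩
      rcases hzero with h | h
      · rcases hone with h' | h'
        · rw [← h] at h'; cases h'
        · exact Or.inr h'
      · exact Or.inr h

/-- The canonical abstraction of a 2-valued structure. -/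
noncomputable def canonAbsStr {σ : Voc} (C : Str2 σ) : Str3 σ where
  U := Quotient (unSetoid C)
  ι := canonI C
  eq_refl := by
    intro u
    classical
    unfold canonI
    split_ifs with h1 h2
    · simp
    · exfalso
      have hmk : Quotient.mk (unSetoid C) ∘ (pair (n := σ.ar σ.eqr) u.out u.out)
          = pair u u := by
        rw [comp_pair]; simp [Quotient.out_eq]
      have := h2 _ hmk
      rw [show C.ι σ.eqr (pair u.out u.out) = true from (C.eq_iff _ _).mpr rfl] at this
      cases this
    · simp
  eq_ne := by
    intro u v huv
    classical
    have hall : ∀ t : Fin (σ.ar σ.eqr) → C.U,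
        Quotient.mk (unSetoid C) ∘ t = pair u v → C.ι σ.eqr t = false := by
      intro t ht
      have h0 : Quotient.mk (unSetoid C) (t (idx0 σ)) = u := by
        have := congrFun ht (idx0 σ); simpa [pair, idx0, Function.comp] using this
      have h1 : Quotient.mk (unSetoid C) (t (idx1 σ)) = v := by
        have := congrFun ht (idx1 σ); simpa [pair, idx1, Function.comp] using this
      rcases Bool.eq_false_or_eq_true (C.ι σ.eqr t) with h | h
      · exfalso
        have := (C.eq_iff' t).mp h
        exact huv (by rw [← h0, ← h1, this])
      · exact h
    unfold canonI
    split_ifs with h1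
    · have hmk : Quotient.mk (unSetoid C) ∘ (pair (n := σ.ar σ.eqr) u.out v.out)
          = pair u v := by
        rw [comp_pair]; simp [Quotient.out_eq]
      have ht := h1 _ hmk
      have hf := hall _ hmk
      rw [ht] at hf; cases hf
    · rfl

lemma canonAbs_isCanonAbs {σ : Voc} (C : Str2 σ) :
    IsCanonAbs C (canonAbsStr C)
      ((Quotient.mk (unSetoid C) : C.U → Quotient (unSetoid C)) :
        C.U → (canonAbsStr C).U) := by
  refine ⟨⟨fun x => ⟨x.out, Quotient.out_eq x⟩, ?_⟩, ?_, ?_⟩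
  · intro r t
    exact (canonI_isJoin C r (Quotient.mk (unSetoid C) ∘ t)).1 _ ⟨t, rfl, rfl⟩
  · intro u v
    exact Quotient.eq (r := unSetoid C)
  · intro p t'
    exact canonI_isJoin C p t'

/-- Canonical abstractions of the same structure are isomorphic. -/
lemma canonAbs_iso {σ : Voc} {C : Str2 σ} {S1 S2 : Str3 σ} {b1 : C.U → S1.U}
    {b2 : C.U → S2.U} (h1 : IsCanonAbs C S1 b1) (h2 : IsCanonAbs C S2 b2) :
    Iso3 S1 S2 := by
  classical
  choose g hg using h1.1.1
  choose g2 hg2 using h2.1.1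
  have key : ∀ u v : C.U, b1 u = b1 v ↔ b2 u = b2 v :=
    fun u v => (h1.2.1 u v).trans (h2.2.1 u v).symm
  have hcomp : ∀ u, b2 (g (b1 u)) = b2 u := fun u => (key _ _).mp (hg (b1 u))
  let e : S1.U ≃ S2.U :=
    { toFun := fun x => b2 (g x)
      invFun := fun y => b1 (g2 y)
      left_inv := fun x => by
        have h := (key (g2 (b2 (g x))) (g x)).mpr (hg2 (b2 (g x)))
        show b1 (g2 (b2 (g x))) = x
        rw [h, hg]
      right_inv := fun y => by
        have h := hcomp (g2 y)
        rw [hg2] at h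
        exact h }
  refine ⟨e, fun p t => ?_⟩
  have hsets : {b | ∃ s : Fin (σ.ar p) → C.U, b1 ∘ s = t ∧ C.tv p s = b} =
      {b | ∃ s : Fin (σ.ar p) → C.U, b2 ∘ s = e ∘ t ∧ C.tv p s = b} := by
    ext v
    constructor
    · rintro ⟨s, hs, rfl⟩
      refine ⟨s, ?_, rfl⟩
      funext i
      have hb1 : b1 (s i) = b1 (g (t i)) := by
        rw [hg (t i)]; exact congrFun hs i
      exact (key _ _).mp hb1
    · rintro ⟨s, hs, rfl⟩
      refine ⟨s, ?_, rfl⟩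
      funext i
      have hb2 : b2 (s i) = b2 (g (t i)) := congrFun hs i
      have hkey := (key (s i) (g (t i))).mpr hb2
      show b1 (s i) = t i
      rw [hkey, hg]
  have j1 := h1.2.2 p t
  have j2 := h2.2.2 p (e ∘ t)
  rw [hsets] at j1
  exact TV.isJoin_unique j1 j2

/-- Being a canonical abstraction transfers along isomorphism. -/
lemma isCanonAbs_of_iso {σ : Voc} {C : Str2 σ} {S1 S2 : Str3 σ}
    (h : Iso3 S1 S2) {b : C.U → S1.U} (hc : IsCanonAbs C S1 b) :
    ∃ b2 : C.U → S2.U, IsCanonAbs C S2 b2 := by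
  obtain ⟨e, he⟩ := h
  refine ⟨e ∘ b, ⟨e.surjective.comp hc.1.1, fun r t => ?_⟩, fun u v => ?_, fun p t' => ?_⟩
  · have hle := hc.1.2 r t
    have heq : S2.ι r ((e ∘ b) ∘ t) = S1.ι r (b ∘ t) := (he r (b ∘ t)).symm
    rw [heq]; exact hle
  · rw [Function.comp_apply, Function.comp_apply, e.injective.eq_iff]
    exact hc.2.1 u v
  · have hset : {v | ∃ t : Fin (σ.ar p) → C.U, (e ∘ b) ∘ t = t' ∧ C.tv p t = v} =
        {v | ∃ t : Fin (σ.ar p) → C.U, b ∘ t = e.symm ∘ t' ∧ C.tv p t = v} := by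
      ext v
      constructor
      · rintro ⟨t, ht, rfl⟩
        refine ⟨t, ?_, rfl⟩
        funext i
        have := congrFun ht i
        simp only [Function.comp_apply] at this ⊢
        rw [← this, e.symm_apply_apply]
      · rintro ⟨t, ht, rfl⟩
        refine ⟨t, ?_, rfl⟩
        funext i
        have := congrFun ht i
        simp only [Function.comp_apply] at this ⊢
        rw [this, e.apply_symm_apply]
    have hι : S2.ι p t' = S1.ι p (e.symm ∘ t') := by
      rw [he p (e.symm ∘ t')]
      congr 1
      funext i
      simp
    rw [hset, hι]
    exact hc.2.2 p (e.symm ∘ t')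

/-- for every ICA structure `S` there is a set `X` of ICA
structures whose concretization is `D \ γ_c(S)`, where `D` is the set of all
2-valued structures satisfying the integrity formula `F`. -/
theorem exists_complement_ICA_set {σ : Voc} [Fintype σ.rel] (F : Fml σ Empty)
    (S : Str3 σ) (hS : ICA S) :
    ∃ X : Set (Str3 σ), (∀ S' ∈ X, ICA S') ∧
      (⋃ S' ∈ X, gammaC F S') =
        {C : Str2 σ | SatC C F} \ gammaC F S := by
  classical
  refine ⟨{S' | ICA S' ∧ gammaC F S' ⊆ {C : Str2 σ | SatC C F} \ gammaC F S},
    fun S' h => h.1, ?_⟩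
  apply Set.Subset.antisymm
  · intro C hC
    simp only [Set.mem_iUnion, Set.mem_setOf_eq] at hC
    obtain ⟨S', ⟨_, hsub⟩, hmem⟩ := hC
    exact hsub hmem
  · intro C hC
    obtain ⟨hCF, hCnot⟩ := hC
    have hca := canonAbs_isCanonAbs C
    have hCmem : C ∈ gammaC F (canonAbsStr C) := ⟨⟨_, hca⟩, hCF⟩
    simp only [Set.mem_iUnion, Set.mem_setOf_eq]
    refine ⟨canonAbsStr C, ⟨⟨C, _, hca⟩, ?_⟩, hCmem⟩
    intro C' hC'
    obtain ⟨⟨b', hb'⟩, hC'F⟩ := hC'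
    refine ⟨hC'F, fun hmem => hCnot ?_⟩
    obtain ⟨⟨bS, hbS⟩, _⟩ := hmem
    have hiso := canonAbs_iso hb' hbS
    obtain ⟨b2, hb2⟩ := isCanonAbs_of_iso hiso hca
    exact ⟨⟨b2, hb2⟩, hCF⟩
end HeapAbs
end

section
/- For every ICA structure S there exists a set X of ICA structures such that the formula F ∧ ¬τ^S is logically equivalent (satisfied by exactly the same 2-valued structures) to the formula γ̂_c(X) = F ∧ (⋁_{S' ∈ X} τ^{S'}). In other words, the class of characteristic formulas for canonical abstraction is closed under negation relative to F. -/
/-!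
Common framework: 2-valued and 3-valued logical structures over a relational
vocabulary with a designated binary equality predicate, embedding, first-order
formulas with transitive closure and their Tarskian semantics, characteristic
formulas, canonical abstraction.
-/

namespace HeapAbs

/-!
For an ICA structure `S`, a 2-valued structure satisfies `τ^S` exactly when `S` is its canonical
abstraction: the unary predicates are definite in `S`, so the node formulas define the fibres of
an embedding into `S`, and the conjuncts `τ^S[p]` make every value 1/2 a genuine join. Canonical
abstraction is unique up to isomorphism, so `X` can be taken to be all ICA structures not
isomorphic to `S`: a structure violating `τ^S` satisfies `τ` of its own canonical abstraction,
which is not isomorphic to `S`, and no structure satisfies both `τ^S` and `τ^{S'}` for `S' ≇ S`.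
-/

namespace TV

theorem le_refl (a : TV) : a.le a := Or.inl rfl

theorem le_half (a : TV) : a.le half := Or.inr rfl

theorem eq_of_le {a b : TV} (h : a.le b) (hb : b ≠ half) : a = b := h.resolve_right hb

variable {A : Set TV} {a b v w : TV}

theorem IsJoin.unique (hv : IsJoin A v) (hw : IsJoin A w) : v = w := by
  rcases hv.2 w hw.1 with h | rfl
  · exact h
  · exact (hw.2 v hv.1).elim Eq.symm id

theorem isJoin_of_mem (hv : v ∈ A) (hub : ∀ a ∈ A, a.le v) : IsJoin A v :=
  ⟨hub, fun _ hw => hw v hv⟩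

theorem isJoin_half (ha : a ∈ A) (hb : b ∈ A) (hab : a ≠ b) : IsJoin A half :=
  ⟨fun c _ => le_half c, fun w hw => by
    rcases hw a ha with rfl | h
    · rcases hw b hb with rfl | h
      · exact absurd rfl hab
      · exact Or.inr h
    · exact Or.inr h⟩

theorem exists_isJoin (hA : A.Nonempty) : ∃ v, IsJoin A v := by
  by_cases h : ∃ a ∈ A, ∃ b ∈ A, a ≠ b
  · obtain ⟨a, ha, b, hb, hab⟩ := h
    exact ⟨half, isJoin_half ha hb hab⟩
  · push Not at h
    obtain ⟨a, ha⟩ := hA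
    exact ⟨a, isJoin_of_mem ha fun b hb => h b hb a ha ▸ le_refl b⟩

theorem IsJoin.one_mem_and_zero_mem (h : IsJoin A half) (hA : ∀ a ∈ A, a ≠ half) :
    one ∈ A ∧ zero ∈ A := by
  constructor <;> by_contra hc
  · have := h.2 zero fun a ha => by
      cases a <;> first | exact le_refl _ | exact (hc ha).elim | exact (hA _ ha rfl).elim
    simp [TV.le] at this
  · have := h.2 one fun a ha => by
      cases a <;> first | exact le_refl _ | exact (hc ha).elim | exact (hA _ ha rfl).elim
    simp [TV.le] at this

end TV

variable {σ : Voc}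

theorem tuple_eq_of_eq_zero {α : Type} {n : ℕ} (h : n = 0) (t t' : Fin n → α) : t = t' := by
  subst h
  exact Subsingleton.elim t t'

theorem tuple_eq_const_of_eq_one {α : Type} {n : ℕ} (h : n = 1) (t : Fin n → α) :
    t = fun _ => t ⟨0, by omega⟩ := by
  subst h
  exact funext fun j => congrArg t (Subsingleton.elim _ _)

theorem comp_lastCases {α : Type} {n : ℕ} (ρ : Fin (n + 1) → α) :
    (fun v => Option.elim v (ρ (Fin.last n)) (ρ ∘ Fin.castSucc)) ∘
      (fun i => Fin.lastCases none (fun j => some j) i) = ρ :=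
  funext fun i => Fin.lastCases (by simp) (fun j => by simp) i

theorem eqr_tuple_eq_pair {α : Type} (t : Fin (σ.ar σ.eqr) → α) :
    t = pair (t ⟨0, by rw [σ.eq_ar]; omega⟩) (t ⟨1, by rw [σ.eq_ar]; omega⟩) := by
  funext i
  have hi : (i : ℕ) < 2 := σ.eq_ar ▸ i.2
  unfold pair
  split_ifs with h
  · exact congrArg t (Fin.ext h)
  · exact congrArg t (Fin.ext (show (i : ℕ) = 1 by omega))

namespace Str2

variable (C : Str2 σ) {r r' : σ.rel} {t : Fin (σ.ar r) → C.U} {t' : Fin (σ.ar r') → C.U}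

theorem tv_ne_half : C.tv r t ≠ TV.half := by
  unfold tv; split <;> simp

variable {C}

theorem tv_eq_one : C.tv r t = TV.one ↔ C.ι r t = true := by
  unfold tv; split <;> simp_all

theorem tv_eq_zero : C.tv r t = TV.zero ↔ C.ι r t = false := by
  unfold tv; split <;> simp_all

theorem tv_eq_tv : C.tv r t = C.tv r' t' ↔ C.ι r t = C.ι r' t' := by
  unfold tv; split <;> split <;> simp_all

end Str2

/-- The last clause of `IsCanonAbs C S blur` says that `S.ι p t'` is the join of
`blurVals C blur p t'`. -/
def blurVals (C : Str2 σ) {A : Type} (blur : C.U → A) (p : σ.rel) (t' : Fin (σ.ar p) → A) :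
    Set TV :=
  {b | ∃ t, blur ∘ t = t' ∧ C.tv p t = b}

section BlurVals

variable {C : Str2 σ} {A B : Type} {blur : C.U → A} {p : σ.rel} {t' : Fin (σ.ar p) → A}

theorem one_mem_blurVals :
    TV.one ∈ blurVals C blur p t' ↔ ∃ t, blur ∘ t = t' ∧ C.ι p t = true := by
  simp only [blurVals, Set.mem_ofPred_eq, Str2.tv_eq_one]

theorem zero_mem_blurVals :
    TV.zero ∈ blurVals C blur p t' ↔ ∃ t, blur ∘ t = t' ∧ C.ι p t = false := by
  simp only [blurVals, Set.mem_ofPred_eq, Str2.tv_eq_zero]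

theorem ne_half_of_mem_blurVals {b : TV} (hb : b ∈ blurVals C blur p t') : b ≠ TV.half := by
  obtain ⟨t, -, rfl⟩ := hb
  exact C.tv_ne_half

theorem blurVals_nonempty (hblur : Function.Surjective blur) :
    (blurVals C blur p t').Nonempty :=
  let ⟨t, ht⟩ := hblur.comp_left t'
  ⟨_, t, ht, rfl⟩

theorem blurVals_comp_left {e : A → B} (he : Function.Injective e) :
    blurVals C (e ∘ blur) p (e ∘ t') = blurVals C blur p t' := by
  ext b
  exact exists_congr fun t => and_congr_left' he.comp_left.eq_iff

end BlurVals

namespace Str2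

variable {C : Str2 σ}

theorem sat_map {V W : Type} (g : V → W) (ρ : W → C.U) (φ : Fml σ V) :
    C.Sat ρ (φ.map g) ↔ C.Sat (ρ ∘ g) φ := by
  induction φ generalizing W with
  | tru => simp [Fml.map, Sat]
  | atom r ts => simp [Fml.map, Sat, Function.comp_assoc]
  | not φ ih => simp [Fml.map, Sat, ih]
  | or φ ψ ih₁ ih₂ => simp [Fml.map, Sat, ih₁, ih₂]
  | ex φ ih =>
      have hρ : ∀ m, (fun v => Option.elim v m ρ) ∘ Option.map g =
          fun v => Option.elim v m (ρ ∘ g) := fun m => funext fun v => by cases v <;> rfl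
      simp only [Fml.map, Sat, ih, hρ]
  | tc φ a b ih =>
      have hρ : ∀ x y, (fun v => Option.elim v y fun v' => Option.elim v' x ρ) ∘
          Option.map (Option.map g) = fun v => Option.elim v y fun v' => Option.elim v' x (ρ ∘ g) :=
        fun x y => funext fun v => by rcases v with _ | _ | v <;> rfl
      simp only [Fml.map, Sat, ih, hρ]
      rfl

variable {V : Type} {ρ : V → C.U}

theorem sat_and {φ ψ : Fml σ V} : C.Sat ρ (φ.and ψ) ↔ C.Sat ρ φ ∧ C.Sat ρ ψ := by
  simp only [Fml.and, Sat]
  tauto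

theorem sat_imp {φ ψ : Fml σ V} : C.Sat ρ (φ.imp ψ) ↔ (C.Sat ρ φ → C.Sat ρ ψ) := by
  simp only [Fml.imp, Sat]
  tauto

theorem sat_all {φ : Fml σ (Option V)} :
    C.Sat ρ (Fml.all φ) ↔ ∀ m : C.U, C.Sat (fun v => Option.elim v m ρ) φ := by
  simp [Fml.all, Sat]

theorem sat_conj {l : List (Fml σ V)} : C.Sat ρ (Fml.conj l) ↔ ∀ φ ∈ l, C.Sat ρ φ := by
  induction l with
  | nil => simp [Fml.conj, Sat]
  | cons φ l ih =>
      change C.Sat ρ (φ.and (Fml.conj l)) ↔ _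
      simp [sat_and, ih]

theorem sat_disj {l : List (Fml σ V)} : C.Sat ρ (Fml.disj l) ↔ ∃ φ ∈ l, C.Sat ρ φ := by
  induction l with
  | nil => simp [Fml.disj, Fml.fls, Sat]
  | cons φ l ih =>
      change C.Sat ρ (φ.or (Fml.disj l)) ↔ _
      simp [Sat, ih]

theorem sat_closeAll {n : ℕ} (ρE : Empty → C.U) (φ : Fml σ (Fin n)) :
    C.Sat ρE (closeAll φ) ↔ ∀ ρ : Fin n → C.U, C.Sat ρ φ := by
  induction n with
  | zero =>
      rw [closeAll, sat_map]
      exact ⟨fun h ρ => tuple_eq_of_eq_zero rfl (ρE ∘ Fin.elim0) ρ ▸ h, fun h => h _⟩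
  | succ n ih =>
      rw [closeAll, ih]
      simp only [sat_all, sat_map]
      refine ⟨fun h ρ => ?_, fun h _ _ => h _⟩
      rw [← comp_lastCases ρ]
      exact h _ _

theorem sat_closeEx {n : ℕ} (ρE : Empty → C.U) (φ : Fml σ (Fin n)) :
    C.Sat ρE (closeEx φ) ↔ ∃ ρ : Fin n → C.U, C.Sat ρ φ := by
  induction n with
  | zero =>
      rw [closeEx, sat_map]
      exact ⟨fun h => ⟨_, h⟩, fun ⟨ρ, h⟩ => tuple_eq_of_eq_zero rfl ρ (ρE ∘ Fin.elim0) ▸ h⟩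
  | succ n ih =>
      rw [closeEx, ih]
      simp only [Sat, sat_map]
      refine ⟨fun ⟨_, _, h⟩ => ⟨_, h⟩, fun ⟨ρ, h⟩ => ⟨ρ ∘ Fin.castSucc, ρ (Fin.last n), ?_⟩⟩
      rwa [comp_lastCases ρ]

end Str2

open Str2

theorem sat_charFml {C : Str2 σ} {V : Type} {ρ : V → C.U} {p : σ.rel}
    {ts : Fin (σ.ar p) → V} {b : TV} :
    C.Sat ρ (charFml p ts b) ↔ (C.tv p (ρ ∘ ts)).le b := by
  cases b with
  | zero => simp [charFml, Sat, TV.le, tv_eq_zero]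
  | half => simp [charFml, Sat, TV.le_half]
  | one => simp [charFml, Sat, TV.le, tv_eq_one]

theorem sat_conj_univ {C : Str2 σ} {V : Type} {ρ : V → C.U} {α : Type} [Fintype α]
    {f : α → Fml σ V} :
    C.Sat ρ (Fml.conj ((Finset.univ : Finset α).toList.map f)) ↔ ∀ a, C.Sat ρ (f a) := by
  simp [sat_conj]

theorem satC_and {C : Str2 σ} {φ ψ : Fml σ Empty} :
    SatC C (φ.and ψ) ↔ SatC C φ ∧ SatC C ψ :=
  sat_and

theorem sat_boundedNode [Fintype σ.rel] {C : Str2 σ} {S : Str3 σ} {w : C.U} {u : S.U} :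
    C.Sat (fun _ => w) (boundedNode S u) ↔
      ∀ p : σ.rel, σ.ar p = 1 → (C.tv p fun _ => w).le (S.ι p fun _ => u) := by
  simp only [boundedNode, sat_conj_univ, sat_charFml, Subtype.forall]
  rfl

theorem Bounded.eq_of_sat_boundedNode [Fintype σ.rel] {S : Str3 σ} (hS : Bounded S)
    {C : Str2 σ} {w : C.U} {u₁ u₂ : S.U} (h₁ : C.Sat (fun _ => w) (boundedNode S u₁))
    (h₂ : C.Sat (fun _ => w) (boundedNode S u₂)) : u₁ = u₂ := by
  by_contra hne
  obtain ⟨p, hp, hdiff, hdef₁, hdef₂⟩ := hS u₁ u₂ hne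
  exact hdiff ((TV.eq_of_le (sat_boundedNode.1 h₁ p hp) hdef₁).symm.trans
    (TV.eq_of_le (sat_boundedNode.1 h₂ p hp) hdef₂))

section NodeSemantics

variable {C : Str2 σ} {S : Str3 σ} {node : S.U → Fml σ Unit}

theorem satC_existsNodes [Fintype S.U] :
    SatC C (Fml.conj ((Finset.univ : Finset S.U).toList.map (existsNode S node))) ↔
      ∀ u, ∃ w, C.Sat (fun _ => w) (node u) := by
  simp only [SatC, sat_conj_univ, existsNode, Sat, sat_map]
  rfl

theorem satC_xiTotal [Fintype S.U] :
    SatC C (xiTotal S node) ↔ ∀ w, ∃ u, C.Sat (fun _ => w) (node u) := by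
  simp only [SatC, xiTotal, sat_all, sat_disj, List.mem_map, Finset.mem_toList, Finset.mem_univ,
    true_and, exists_exists_eq_and, sat_map]
  rfl

theorem satC_xiNullary [Fintype σ.rel] :
    SatC C (xiNullary S) ↔ ∀ p : σ.rel, σ.ar p = 0 →
      ∀ (t : Fin (σ.ar p) → C.U) (t' : Fin (σ.ar p) → S.U), (C.tv p t).le (S.ι p t') := by
  rw [SatC, xiNullary, sat_conj_univ]
  refine forall_congr' fun p => ?_
  split_ifs with hp
  · rw [sat_charFml]
    refine ⟨fun h _ t t' => ?_, fun h => h hp _ _⟩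
    convert h using 2 <;> exact tuple_eq_of_eq_zero hp _ _
  · simp [hp, Sat]

variable {blur : C.U → S.U}

def DefinesFibers (C : Str2 σ) {S : Str3 σ} (node : S.U → Fml σ Unit) (blur : C.U → S.U) :
    Prop :=
  ∀ w u, blur w = u ↔ C.Sat (fun _ => w) (node u)

theorem sat_nodeTuple_iff (hnode : DefinesFibers C node blur)
    {n : ℕ} {ρ : Fin n → C.U} {t' : Fin n → S.U} :
    C.Sat ρ (nodeTuple S node t') ↔ blur ∘ ρ = t' := by
  simp only [nodeTuple, sat_conj, List.mem_ofFn, forall_exists_index, forall_apply_eq_imp_iff,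
    sat_map, funext_iff, Function.comp_apply]
  exact forall_congr' fun j => (hnode _ _).symm

theorem satC_xiPred [Fintype S.U] (hnode : DefinesFibers C node blur)
    (p : σ.rel) : SatC C (xiPred S node p) ↔ ∀ t, (C.tv p t).le (S.ι p (blur ∘ t)) := by
  simp only [SatC, xiPred, sat_closeAll, sat_conj, List.mem_map, Finset.mem_toList,
    Finset.mem_univ, true_and, forall_exists_index, forall_apply_eq_imp_iff, sat_imp,
    sat_nodeTuple_iff hnode, sat_charFml, forall_eq']
  rfl

theorem satC_xiPredAll [Fintype σ.rel] [Fintype S.U]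
    (hnode : DefinesFibers C node blur) :
    SatC C (xiPredAll S node) ↔
      ∀ r : σ.rel, σ.ar r ≠ 0 → ∀ t, (C.tv r t).le (S.ι r (blur ∘ t)) := by
  rw [SatC, xiPredAll, sat_conj_univ]
  refine forall_congr' fun r => ?_
  split_ifs with hr
  · simp [hr, Sat]
  · rw [← SatC, satC_xiPred hnode]
    simp [hr]

theorem satC_xi_iff [Fintype σ.rel] [Fintype S.U]
    (hnode : DefinesFibers C node blur) :
    SatC C (xi S node) ↔ Embeds C S blur := by
  have htotal : SatC C (xiTotal S node) := satC_xiTotal.2 fun w => ⟨blur w, (hnode w _).1 rfl⟩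
  have hsurj : (∀ u, ∃ w, C.Sat (fun _ => w) (node u)) ↔ Function.Surjective blur :=
    forall_congr' fun u => exists_congr fun w => (hnode w u).symm
  rw [xi, satC_and, satC_and, satC_and, satC_existsNodes, hsurj, and_iff_right htotal,
    satC_xiNullary, satC_xiPredAll hnode, Embeds]
  refine and_congr_right' ⟨fun ⟨h₀, h⟩ r t => ?_, fun h => ⟨fun r hr t t' => ?_, fun r _ => h r⟩⟩
  · by_cases hr : σ.ar r = 0
    · exact h₀ r hr t _
    · exact h r hr t
  · exact tuple_eq_of_eq_zero hr (blur ∘ t) t' ▸ h r t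

end NodeSemantics

section TauSemantics

variable {C : Str2 σ} {S : Str3 σ} [Fintype S.U] {node : S.U → Fml σ Unit} {blur : C.U → S.U}

theorem satC_tauPred_iff (hnode : DefinesFibers C node blur)
    (p : σ.rel) :
    SatC C (tauPred S node p) ↔ ∀ t', S.ι p t' = TV.half →
      TV.one ∈ blurVals C blur p t' ∧ TV.zero ∈ blurVals C blur p t' := by
  simp only [SatC, tauPred, sat_conj, List.mem_map, List.mem_filter, Finset.mem_toList,
    Finset.mem_univ, true_and, decide_eq_true_eq, forall_exists_index, and_imp,
    forall_apply_eq_imp_iff₂, sat_and, sat_closeEx, sat_nodeTuple_iff hnode, one_mem_blurVals,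
    zero_mem_blurVals, Sat, Bool.not_eq_true]
  rfl

theorem satC_tau_iff [Fintype σ.rel] (hnode : DefinesFibers C node blur) :
    SatC C (tau S node) ↔ Embeds C S blur ∧ ∀ p : σ.rel, 2 ≤ σ.ar p → ∀ t', S.ι p t' = TV.half →
      TV.one ∈ blurVals C blur p t' ∧ TV.zero ∈ blurVals C blur p t' := by
  rw [tau, satC_and, satC_xi_iff hnode, SatC, sat_conj_univ]
  refine and_congr_right' (forall_congr' fun p => ?_)
  split_ifs with hp
  · rw [← SatC, satC_tauPred_iff hnode]
    simp [hp]
  · simp [hp, Sat]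

theorem satC_xiTotal_of_satC_tau [Fintype σ.rel] (h : SatC C (tau S node)) :
    SatC C (xiTotal S node) :=
  (satC_and.1 (satC_and.1 (satC_and.1 h).1).2).1

theorem exists_blur_of_satC_xiTotal
    (hexcl : ∀ w u₁ u₂, C.Sat (fun _ => w) (node u₁) → C.Sat (fun _ => w) (node u₂) → u₁ = u₂)
    (h : SatC C (xiTotal S node)) :
    ∃ blur : C.U → S.U, DefinesFibers C node blur := by
  choose blur hblur using satC_xiTotal.1 h
  exact ⟨blur, fun w u => ⟨(· ▸ hblur w), hexcl w _ _ (hblur w)⟩⟩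

end TauSemantics

section CanonAbs

variable {C : Str2 σ} {S : Str3 σ} {blur : C.U → S.U}

theorem IsCanonAbs.one_mem_and_zero_mem (h : IsCanonAbs C S blur) {p : σ.rel}
    {t' : Fin (σ.ar p) → S.U} (hh : S.ι p t' = TV.half) :
    TV.one ∈ blurVals C blur p t' ∧ TV.zero ∈ blurVals C blur p t' := by
  have hjoin : TV.IsJoin (blurVals C blur p t') TV.half := hh ▸ h.2.2 p t'
  exact hjoin.one_mem_and_zero_mem fun _ => ne_half_of_mem_blurVals

theorem IsCanonAbs.iota_ne_half (h : IsCanonAbs C S blur) (p : σ.rel) (hp : σ.ar p ≤ 1)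
    (t' : Fin (σ.ar p) → S.U) : S.ι p t' ≠ TV.half := by
  intro hh
  -- A value 1/2 needs two tuples with different values in one fibre of `blur`; for
  -- arity at most one, the tuples of a fibre all carry the same value.
  obtain ⟨⟨t₁, ht₁, hv₁⟩, ⟨t₀, ht₀, hv₀⟩⟩ := h.one_mem_and_zero_mem hh
  have hfiber : blur ∘ t₁ = blur ∘ t₀ := ht₁.trans ht₀.symm
  have hsame : C.ι p t₁ = C.ι p t₀ := by
    rcases Nat.le_one_iff_eq_zero_or_eq_one.1 hp with hp | hp
    · rw [tuple_eq_of_eq_zero hp t₁ t₀]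
    · rw [tuple_eq_const_of_eq_one hp t₁, tuple_eq_const_of_eq_one hp t₀]
      exact (h.2.1 _ _).1 (congrFun hfiber _) p hp
  rw [← tv_eq_tv, hv₁, hv₀] at hsame
  exact TV.noConfusion hsame

theorem IsCanonAbs.tv_eq (h : IsCanonAbs C S blur) {p : σ.rel} (hp : σ.ar p ≤ 1)
    (t : Fin (σ.ar p) → C.U) : C.tv p t = S.ι p (blur ∘ t) :=
  TV.eq_of_le (h.1.2 p t) (h.iota_ne_half p hp _)

theorem IsCanonAbs.definesFibers [Fintype σ.rel] (h : IsCanonAbs C S blur) :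
    DefinesFibers C (boundedNode S) blur := by
  intro w u
  rw [sat_boundedNode]
  refine ⟨fun hw p _ => hw ▸ h.1.2 p _, fun hle => ?_⟩
  obtain ⟨w', rfl⟩ := h.1.1 u
  refine (h.2.1 w w').2 fun p hp => tv_eq_tv.1 ?_
  exact (TV.eq_of_le (hle p hp) (h.iota_ne_half p hp.le _)).trans (h.tv_eq hp.le _).symm

theorem IsCanonAbs.bounded (h : IsCanonAbs C S blur) : Bounded S := by
  intro u₁ u₂ hne
  obtain ⟨w₁, rfl⟩ := h.1.1 u₁
  obtain ⟨w₂, rfl⟩ := h.1.1 u₂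
  obtain ⟨p, hp, hdiff⟩ : ∃ p, σ.ar p = 1 ∧ C.ι p (fun _ => w₁) ≠ C.ι p (fun _ => w₂) := by
    by_contra! hall
    exact hne ((h.2.1 w₁ w₂).2 hall)
  have e₁ : S.ι p (fun _ => blur w₁) = C.tv p fun _ => w₁ := (h.tv_eq hp.le _).symm
  have e₂ : S.ι p (fun _ => blur w₂) = C.tv p fun _ => w₂ := (h.tv_eq hp.le _).symm
  refine ⟨p, hp, ?_, h.iota_ne_half p hp.le _, h.iota_ne_half p hp.le _⟩
  rw [e₁, e₂]
  exact mt tv_eq_tv.1 hdiff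

theorem IsCanonAbs.satC_tau [Fintype σ.rel] [Fintype S.U] (h : IsCanonAbs C S blur) :
    SatC C (tau S (boundedNode S)) :=
  (satC_tau_iff h.definesFibers).2 ⟨h.1, fun _ _ _ hh => h.one_mem_and_zero_mem hh⟩

theorem Embeds.isCanonAbs (he : Embeds C S blur) (hb : Bounded S)
    (hdef : ∀ p : σ.rel, σ.ar p ≤ 1 → ∀ t', S.ι p t' ≠ TV.half)
    (hhalf : ∀ p t', S.ι p t' = TV.half →
      TV.one ∈ blurVals C blur p t' ∧ TV.zero ∈ blurVals C blur p t') :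
    IsCanonAbs C S blur := by
  have htv : ∀ p, σ.ar p = 1 → ∀ w, C.tv p (fun _ => w) = S.ι p (fun _ => blur w) :=
    fun p hp w => TV.eq_of_le (he.2 p _) (hdef p hp.le _)
  refine ⟨he, fun u v => ⟨fun huv p hp => tv_eq_tv.1 ?_, fun hnames => ?_⟩, fun p t' => ?_⟩
  · rw [htv p hp, htv p hp, huv]
  · by_contra hne
    obtain ⟨p, hp, hdiff, -, -⟩ := hb _ _ hne
    rw [← htv p hp, ← htv p hp] at hdiff
    exact hdiff (tv_eq_tv.2 (hnames p hp))
  · change TV.IsJoin (blurVals C blur p t') _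
    by_cases hh : S.ι p t' = TV.half
    · obtain ⟨h₁, h₀⟩ := hhalf p t' hh
      rw [hh]
      exact TV.isJoin_half h₁ h₀ TV.noConfusion
    · obtain ⟨t, rfl⟩ := he.1.comp_left t'
      refine TV.isJoin_of_mem ⟨t, rfl, TV.eq_of_le (he.2 p t) hh⟩ ?_
      rintro _ ⟨s, hs, rfl⟩
      exact hs ▸ he.2 p s

end CanonAbs

theorem ICA.iota_ne_half {S : Str3 σ} (hS : ICA S) (p : σ.rel) (hp : σ.ar p ≤ 1)
    (t' : Fin (σ.ar p) → S.U) : S.ι p t' ≠ TV.half :=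
  let ⟨_, _, h⟩ := hS
  h.iota_ne_half p hp t'

theorem ICA.bounded {S : Str3 σ} (hS : ICA S) : Bounded S :=
  let ⟨_, _, h⟩ := hS
  h.bounded

theorem ICA.exists_isCanonAbs_of_satC_tau [Fintype σ.rel] {S : Str3 σ} [Fintype S.U]
    (hS : ICA S) {C : Str2 σ} (hC : SatC C (tau S (boundedNode S))) :
    ∃ blur, IsCanonAbs C S blur := by
  obtain ⟨blur, hnode⟩ := exists_blur_of_satC_xiTotal
    (fun _ _ _ => hS.bounded.eq_of_sat_boundedNode) (satC_xiTotal_of_satC_tau hC)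
  obtain ⟨he, hhalf⟩ := (satC_tau_iff hnode).1 hC
  refine ⟨blur, he.isCanonAbs hS.bounded hS.iota_ne_half fun p t' hh => hhalf p ?_ t' hh⟩
  by_contra hp
  exact hS.iota_ne_half p (by omega) t' hh

theorem exists_equiv_comp_eq_of_ker_eq {α β γ : Type*} {f : α → β} {g : α → γ}
    (hf : Function.Surjective f) (hg : Function.Surjective g)
    (hfg : ∀ a a', f a = f a' ↔ g a = g a') : ∃ e : β ≃ γ, e ∘ f = g := by
  have hcomm : (g ∘ Function.surjInv hf) ∘ f = g :=
    funext fun a => (hfg _ _).1 (Function.surjInv_eq hf (f a))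
  refine ⟨Equiv.ofBijective (g ∘ Function.surjInv hf) ⟨fun b b' hbb' => ?_, fun c => ?_⟩, hcomm⟩
  · rw [← Function.surjInv_eq hf b, ← Function.surjInv_eq hf b']
    exact (hfg _ _).2 hbb'
  · obtain ⟨a, rfl⟩ := hg c
    exact ⟨f a, congrFun hcomm a⟩

section Uniqueness

variable {C : Str2 σ} {S₁ S₂ : Str3 σ}

theorem IsCanonAbs.iso3 {b₁ : C.U → S₁.U} {b₂ : C.U → S₂.U} (h₁ : IsCanonAbs C S₁ b₁)
    (h₂ : IsCanonAbs C S₂ b₂) : Iso3 S₁ S₂ := by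
  obtain ⟨e, he⟩ := exists_equiv_comp_eq_of_ker_eq h₁.1.1 h₂.1.1 fun w w' =>
    (h₁.2.1 w w').trans (h₂.2.1 w w').symm
  refine ⟨e, fun p t => (h₁.2.2 p t).unique ?_⟩
  have hjoin : TV.IsJoin (blurVals C b₂ p (e ∘ t)) (S₂.ι p (e ∘ t)) := h₂.2.2 p (e ∘ t)
  rwa [← he, blurVals_comp_left e.injective] at hjoin

theorem IsCanonAbs.of_iso3 {b : C.U → S₁.U} (h : IsCanonAbs C S₁ b) (hiso : Iso3 S₁ S₂) :
    ∃ b₂ : C.U → S₂.U, IsCanonAbs C S₂ b₂ := by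
  obtain ⟨e, he⟩ := hiso
  refine ⟨e ∘ b, ⟨e.surjective.comp h.1.1, fun r t => he r (b ∘ t) ▸ h.1.2 r t⟩,
    fun u v => e.injective.eq_iff.trans (h.2.1 u v), fun p t' => ?_⟩
  change TV.IsJoin (blurVals C (e ∘ b) p t') _
  obtain ⟨t, rfl⟩ := e.surjective.comp_left t'
  rw [blurVals_comp_left e.injective, ← he]
  exact h.2.2 p t

end Uniqueness

section Abstraction

variable {C : Str2 σ} {A : Type} {blur : C.U → A}

noncomputable def joinIota (hblur : Function.Surjective blur) (p : σ.rel)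
    (t' : Fin (σ.ar p) → A) : TV :=
  (TV.exists_isJoin (blurVals_nonempty (p := p) (t' := t') hblur)).choose

theorem isJoin_joinIota (hblur : Function.Surjective blur) (p : σ.rel)
    (t' : Fin (σ.ar p) → A) : TV.IsJoin (blurVals C blur p t') (joinIota hblur p t') :=
  (TV.exists_isJoin (blurVals_nonempty hblur)).choose_spec

theorem joinIota_pair_self_ne_zero (hblur : Function.Surjective blur) (u : A) :
    joinIota hblur σ.eqr (pair u u) ≠ TV.zero := by
  obtain ⟨w, rfl⟩ := hblur u
  have hone : TV.one ∈ blurVals C blur σ.eqr (pair (blur w) (blur w)) :=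
    one_mem_blurVals.2 ⟨pair w w, funext fun _ => by simp [pair],
      (C.eq_iff w w).2 rfl⟩
  intro hzero
  have := (isJoin_joinIota hblur _ _).1 _ hone
  rw [hzero] at this
  simp [TV.le] at this

theorem joinIota_pair_of_ne (hblur : Function.Surjective blur) {u v : A} (huv : u ≠ v) :
    joinIota hblur σ.eqr (pair u v) = TV.zero := by
  have hfalse : ∀ b ∈ blurVals C blur σ.eqr (pair u v), b = TV.zero := by
    rintro _ ⟨t, ht, rfl⟩
    rw [tv_eq_zero, eqr_tuple_eq_pair t, Bool.eq_false_iff, Ne, C.eq_iff]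
    rw [eqr_tuple_eq_pair t] at ht
    intro heq
    refine huv ?_
    have h₀ := congrFun ht ⟨0, by rw [σ.eq_ar]; omega⟩
    have h₁ := congrFun ht ⟨1, by rw [σ.eq_ar]; omega⟩
    simp only [pair, Function.comp_apply] at h₀ h₁
    simp_all
  obtain ⟨b, hb⟩ := blurVals_nonempty (C := C) (p := σ.eqr) (t' := pair u v) hblur
  obtain rfl := hfalse b hb
  exact (isJoin_joinIota hblur _ _).unique
    (TV.isJoin_of_mem hb fun b' hb' => hfalse b' hb' ▸ TV.le_refl _)

end Abstraction

abbrev CanonName (σ : Voc) : Type := {p : σ.rel // σ.ar p = 1} → Bool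

def Str2.canonName (C : Str2 σ) (w : C.U) : CanonName σ := fun p => C.ι p.1 fun _ => w

/-- Unlike `Str3 σ : Type 1`, structures whose nodes are canonical names form a `Type`, so
they can index the family of structures in `tau_closed_under_negation`. -/
structure NameStr3 (σ : Voc) : Type where
  A : Set (CanonName σ)
  ι : (r : σ.rel) → (Fin (σ.ar r) → A) → TV
  eq_refl : ∀ u : A, ι σ.eqr (pair u u) ≠ TV.zero
  eq_ne : ∀ u v : A, u ≠ v → ι σ.eqr (pair u v) = TV.zero

def NameStr3.toStr3 (d : NameStr3 σ) : Str3 σ := ⟨d.A, d.ι, d.eq_refl, d.eq_ne⟩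

noncomputable instance [Fintype σ.rel] (d : NameStr3 σ) : Fintype d.toStr3.U :=
  Fintype.ofFinite d.A

noncomputable def Str2.canonAbs (C : Str2 σ) : NameStr3 σ where
  A := Set.range C.canonName
  ι := joinIota Set.rangeFactorization_surjective
  eq_refl := joinIota_pair_self_ne_zero _
  eq_ne _ _ := joinIota_pair_of_ne _

theorem Str2.isCanonAbs_canonAbs (C : Str2 σ) :
    IsCanonAbs C C.canonAbs.toStr3 (Set.rangeFactorization C.canonName) := by
  have hsurj := Set.rangeFactorization_surjective (f := C.canonName)
  refine ⟨⟨hsurj, fun r t => (isJoin_joinIota hsurj r _).1 _ ⟨t, rfl, rfl⟩⟩, fun u v => ?_,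
    isJoin_joinIota hsurj⟩
  exact Subtype.ext_iff.trans (funext_iff.trans Subtype.forall)

/-- for every ICA structure `S` there is a set (family) `X` of
ICA structures such that `F ∧ ¬τ^S` is satisfied by exactly the same 2-valued
structures as `γ̂_c(X) = F ∧ ⋁_{S' ∈ X} τ^{S'}`: the class of characteristic
formulas for canonical abstraction is closed under negation relative to `F`. -/
theorem tau_closed_under_negation {σ : Voc} [Fintype σ.rel] (F : Fml σ Empty)
    (S : Str3 σ) [Fintype S.U] (hS : ICA S) :
    ∃ (I : Type) (X : I → Str3 σ) (fin : ∀ i, Fintype (X i).U),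
      (∀ i, ICA (X i)) ∧
      ∀ C : Str2 σ,
        SatC C (F.and (Fml.not (tau S (boundedNode S)))) ↔
          (SatC C F ∧
            ∃ i : I, SatC C (@tau σ _ (X i) (fin i) (boundedNode (X i)))) := by
  refine ⟨{d : NameStr3 σ // ICA d.toStr3 ∧ ¬ Iso3 d.toStr3 S}, fun d => d.1.toStr3,
    fun _ => inferInstance, fun d => d.2.1, fun C => ?_⟩
  rw [satC_and]
  refine and_congr_right fun _ => ⟨fun hC => ?_, ?_⟩
  · have hcanon := C.isCanonAbs_canonAbs
    refine ⟨⟨C.canonAbs, ⟨_, _, hcanon⟩, fun hiso => hC ?_⟩, hcanon.satC_tau⟩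
    obtain ⟨b, hb⟩ := hcanon.of_iso3 hiso
    exact hb.satC_tau
  · rintro ⟨⟨d, hd, hiso⟩, hCd⟩ hCS
    obtain ⟨b₁, h₁⟩ := hd.exists_isCanonAbs_of_satC_tau hCd
    obtain ⟨b₂, h₂⟩ := hS.exists_isCanonAbs_of_satC_tau hCS
    exact hiso (h₁.iso3 h₂)

end HeapAbs
end
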